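/- arXiv:2509.11573 — 5 statements merged into one kernel-verified Lean document; each statement's English description precedes it below -/
import Mathlib

section
/- For every (x,y) ∈ ℝ^2, the 4×4 symmetric matrix G(x,y) with entries G11 = 1-x^2, G12 = G21 = -xy, G22 = 1-y^2, G13 = G31 = -2x, G23 = G32 = -2y, G33 = x^2+y^2-1, G44 = x^2+y^2+1, and all other entries zero, has determinant -(1+x^2+y^2)^3; in particular G(x,y) is nondegenerate and has exactly one negative eigenvalue (signature (1,3)). (This is the Itty-Bitty Blender metric written in Cartesian coordinates (x,y,α,β), showing it is a Lorentzian metric on all of ℝ^2 × T^2, including across r = 0.) -/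
/-- The matrix of the Itty-Bitty Blender metric in Cartesian coordinates `(x,y,α,β)`. -/
noncomputable def blenderMatrix (x y : ℝ) : Matrix (Fin 4) (Fin 4) ℝ :=
  !![1 - x ^ 2, -(x * y), -2 * x, 0;
     -(x * y), 1 - y ^ 2, -2 * y, 0;
     -2 * x, -2 * y, x ^ 2 + y ^ 2 - 1, 0;
     0, 0, 0, x ^ 2 + y ^ 2 + 1]

theorem det_fin_four' {R : Type*} [CommRing R] (M : Matrix (Fin 4) (Fin 4) R) :
    M.det = M 0 0 * (M 1 1 * (M 2 2 * M 3 3 - M 2 3 * M 3 2) - M 1 2 * (M 2 1 * M 3 3 - M 2 3 * M 3 1) + M 1 3 * (M 2 1 * M 3 2 - M 2 2 * M 3 1))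
      - M 0 1 * (M 1 0 * (M 2 2 * M 3 3 - M 2 3 * M 3 2) - M 1 2 * (M 2 0 * M 3 3 - M 2 3 * M 3 0) + M 1 3 * (M 2 0 * M 3 2 - M 2 2 * M 3 0))
      + M 0 2 * (M 1 0 * (M 2 1 * M 3 3 - M 2 3 * M 3 1) - M 1 1 * (M 2 0 * M 3 3 - M 2 3 * M 3 0) + M 1 3 * (M 2 0 * M 3 1 - M 2 1 * M 3 0))
      - M 0 3 * (M 1 0 * (M 2 1 * M 3 2 - M 2 2 * M 3 1) - M 1 1 * (M 2 0 * M 3 2 - M 2 2 * M 3 0) + M 1 2 * (M 2 0 * M 3 1 - M 2 1 * M 3 0)) := by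
  have h1 : Fin.succ (2 : Fin 3) = 3 := rfl
  have h2 : Fin.castSucc (2 : Fin 3) = 2 := rfl
  rw [Matrix.det_succ_row_zero]
  simp [Fin.sum_univ_succ, Matrix.det_fin_three, Fin.succAbove, h1, h2]
  ring

theorem trace_eq_sum_eig {n : Type*} [Fintype n] [DecidableEq n] {A : Matrix n n ℝ}
    (hA : A.IsHermitian) : A.trace = ∑ i, hA.eigenvalues i := by
  conv_lhs => rw [hA.spectral_theorem, Unitary.conjStarAlgAut_apply]
  rw [Matrix.trace_mul_comm, ← mul_assoc]
  rw [Unitary.coe_star_mul_self, one_mul, Matrix.trace_diagonal]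
  simp

/-- The Itty-Bitty Blender metric in Cartesian coordinates `(x,y,α,β)` has determinant
`-(1+x²+y²)³`; in particular it is nondegenerate and (being symmetric) has exactly one negative
eigenvalue, i.e. signature `(1,3)`.  Hence it is a Lorentzian metric on all of `ℝ² × T²`,
including across `r = 0`. -/
theorem blender_lorentzian_everywhere (x y : ℝ) :
    (blenderMatrix x y).det = -(1 + x ^ 2 + y ^ 2) ^ 3 ∧
    (blenderMatrix x y).det ≠ 0 ∧
    ∀ (hG : (blenderMatrix x y).IsHermitian), ∃! i : Fin 4, hG.eigenvalues i < 0 := by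
  set a : ℝ := 1 + x ^ 2 + y ^ 2 with ha_def
  have ha1 : 1 ≤ a := by nlinarith [sq_nonneg x, sq_nonneg y]
  have ha : 0 < a := by linarith
  have hdet : (blenderMatrix x y).det = -a ^ 3 := by
    rw [det_fin_four']
    simp [blenderMatrix]
    ring
  refine ⟨hdet, by rw [hdet]; exact neg_ne_zero.mpr (by positivity), ?_⟩
  intro hG
  -- every eigenvalue is a root of the characteristic polynomial
  have hchar : ∀ t : ℝ, (t • (1 : Matrix (Fin 4) (Fin 4) ℝ) - blenderMatrix x y).det
      = (t - 1) * (t - a) ^ 2 * (t + a) := by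
    intro t
    rw [det_fin_four']
    simp [blenderMatrix, Matrix.smul_apply, Matrix.one_apply]
    ring
  have hspec : ∀ i : Fin 4, hG.eigenvalues i = 1 ∨ hG.eigenvalues i = a ∨
      hG.eigenvalues i = -a := by
    intro i
    have hm := hG.eigenvalues_mem_spectrum_real i
    rw [spectrum.mem_iff, Algebra.algebraMap_eq_smul_one,
      Matrix.isUnit_iff_isUnit_det, isUnit_iff_ne_zero, not_ne_iff] at hm
    rw [hchar] at hm
    rcases mul_eq_zero.mp hm with hm | hm
    · rcases mul_eq_zero.mp hm with hm | hm
      · exact Or.inl (by linarith [sub_eq_zero.mp hm])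
      · have := pow_eq_zero_iff two_ne_zero |>.mp hm
        exact Or.inr (Or.inl (by linarith [sub_eq_zero.mp this]))
    · exact Or.inr (Or.inr (by linarith [eq_neg_of_add_eq_zero_left hm]))
  have hprod : ∏ i, hG.eigenvalues i = -a ^ 3 := by
    have := hG.det_eq_prod_eigenvalues
    rw [hdet] at this
    simpa using this.symm
  have hsum : ∑ k, hG.eigenvalues k = 1 + a := by
    rw [← trace_eq_sum_eig hG]
    simp [Matrix.trace, blenderMatrix, Fin.sum_univ_four, Matrix.diag]
    ring
  have hb : ∀ k, hG.eigenvalues k ≤ a := by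
    intro k
    rcases hspec k with h | h | h <;> rw [h] <;> linarith
  have hneg : ∀ k, hG.eigenvalues k < 0 → hG.eigenvalues k = -a := by
    intro k hk
    rcases hspec k with h | h | h
    · exfalso; rw [h] at hk; linarith
    · exfalso; rw [h] at hk; linarith
    · exact h
  -- at most one eigenvalue equals -a
  have key : ∀ i j : Fin 4, hG.eigenvalues i = -a → hG.eigenvalues j = -a → i = j := by
    intro i j hi hj
    by_contra hij
    have hpair : ({i, j} : Finset (Fin 4)) ⊆ Finset.univ := Finset.subset_univ _
    have hsplit := Finset.sum_sdiff (f := hG.eigenvalues) hpair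
    rw [Finset.sum_pair hij, hsum, hi, hj] at hsplit
    have hScard : (Finset.univ \ ({i, j} : Finset (Fin 4))).card = 2 := by
      rw [Finset.card_sdiff_of_subset hpair, Finset.card_pair hij]
      simp
    have hSle : ∑ k ∈ Finset.univ \ ({i, j} : Finset (Fin 4)), hG.eigenvalues k ≤ a + a := by
      calc ∑ k ∈ Finset.univ \ ({i, j} : Finset (Fin 4)), hG.eigenvalues k
          ≤ ∑ _k ∈ Finset.univ \ ({i, j} : Finset (Fin 4)), a :=
            Finset.sum_le_sum fun k _ => hb k
        _ = a + a := by rw [Finset.sum_const, hScard, two_nsmul]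
    linarith
  -- existence of a negative eigenvalue
  have hex : ∃ i : Fin 4, hG.eigenvalues i < 0 := by
    by_contra h
    push_neg at h
    have h0 : (0 : ℝ) ≤ ∏ i, hG.eigenvalues i :=
      Finset.prod_nonneg fun k _ => h k
    rw [hprod] at h0
    have : (0:ℝ) < a ^ 3 := by positivity
    linarith
  obtain ⟨i, hi⟩ := hex
  exact ⟨i, hi, fun j hj => key j i (hneg j hj) (hneg i hi)⟩
end

section
/- Let ε > 0, a_eq > 0, and a₀ > 0 satisfy ε ≤ a₀²/(2·a_eq). Then 10^{1/ε}·a₀ ≥ 2·√(e·ln(10)·a_eq). (Hence in the exotic-fluid reflective big bang model, if ε is small enough to resolve the horizon problem via the estimate d_causal/d_CMB ≳ a₀/√(2 a_eq ε), then the scale factor a₂ = 10^{1/ε}a₀ at which the exotic fluid becomes negligible exceeds 2√(e ln(10) a_eq) ≈ 0.086 ≫ a_eq, strongly modifying standard cosmology in well-tested regimes.) -/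
/-- If `ε ≤ a₀²/(2 a_eq)` (the condition for resolving the horizon problem via the estimate
`d_causal/d_CMB ≳ a₀/√(2 a_eq ε)` in the exotic-fluid reflective big bang model), then the scale
factor `a₂ = 10^{1/ε} a₀` at which the exotic fluid becomes negligible satisfies
`a₂ ≥ 2√(e·ln(10)·a_eq)`, strongly modifying standard cosmology in well-tested regimes. -/
theorem horizon_resolution_obstruction (ε aeq a₀ : ℝ)
    (hε : 0 < ε) (haeq : 0 < aeq) (ha₀ : 0 < a₀)
    (h : ε ≤ a₀ ^ 2 / (2 * aeq)) :
    (10 : ℝ) ^ (1 / ε) * a₀ ≥ 2 * Real.sqrt (Real.exp 1 * Real.log 10 * aeq) := by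
  have hln : 0 < Real.log 10 := Real.log_pos (by norm_num)
  have hrpos : (0:ℝ) < (10 : ℝ) ^ (1 / ε) := Real.rpow_pos_of_pos (by norm_num) _
  -- a₀ ≥ sqrt(2 aeq ε)
  have ha2 : 2 * aeq * ε ≤ a₀ ^ 2 := by
    have := (le_div_iff₀ (show (0:ℝ) < 2 * aeq by positivity)).mp h
    nlinarith
  have ha : Real.sqrt (2 * aeq * ε) ≤ a₀ := by
    have := Real.sqrt_le_sqrt ha2
    rwa [Real.sqrt_sq ha₀.le] at this
  have step1 : (10 : ℝ) ^ (1 / ε) * Real.sqrt (2 * aeq * ε) ≤ (10 : ℝ) ^ (1 / ε) * a₀ :=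
    mul_le_mul_of_nonneg_left ha hrpos.le
  refine le_trans ?_ step1
  -- rewrite both sides as sqrt
  have hL : Real.sqrt (4 * (Real.exp 1 * Real.log 10 * aeq))
      = 2 * Real.sqrt (Real.exp 1 * Real.log 10 * aeq) := by
    rw [show (4:ℝ) = 2^2 by norm_num, Real.sqrt_mul (by positivity),
      Real.sqrt_sq (by norm_num : (0:ℝ) ≤ 2)]
  have hR : Real.sqrt (((10 : ℝ) ^ (1 / ε))^2 * (2 * aeq * ε))
      = (10 : ℝ) ^ (1 / ε) * Real.sqrt (2 * aeq * ε) := by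
    rw [Real.sqrt_mul (by positivity), Real.sqrt_sq hrpos.le]
  rw [← hL, ← hR]
  apply Real.sqrt_le_sqrt
  -- key inequality
  have hsq : ((10 : ℝ) ^ (1 / ε))^2 = Real.exp (Real.log 10 * (2 / ε)) := by
    rw [← Real.rpow_natCast ((10:ℝ) ^ (1/ε)) 2, ← Real.rpow_mul (by norm_num),
      Real.rpow_def_of_pos (by norm_num : (0:ℝ) < 10)]
    norm_num
    ring_nf
  rw [hsq]
  set t := Real.log 10 * (2 / ε) with htdef
  have ht : 0 < t := by positivity
  have hexp : Real.exp 1 * t ≤ Real.exp t := by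
    have h1 : t ≤ Real.exp (t - 1) := by
      have := Real.add_one_le_exp (t - 1); linarith
    calc Real.exp 1 * t ≤ Real.exp 1 * Real.exp (t - 1) :=
          mul_le_mul_of_nonneg_left h1 (Real.exp_pos 1).le
      _ = Real.exp t := by rw [← Real.exp_add]; ring_nf
  have htε : t * ε = 2 * Real.log 10 := by
    rw [htdef, mul_assoc, div_mul_cancel₀ 2 hε.ne']; ring
  have key := mul_le_mul_of_nonneg_right hexp
    (by positivity : (0:ℝ) ≤ 2 * aeq * ε)
  have heq : Real.exp 1 * t * (2 * aeq * ε) = 4 * (Real.exp 1 * Real.log 10 * aeq) := by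
    calc Real.exp 1 * t * (2 * aeq * ε) = Real.exp 1 * (t * ε) * (2 * aeq) := by ring
      _ = 4 * (Real.exp 1 * Real.log 10 * aeq) := by rw [htε]; ring
  linarith
end

section
/- Let Ω_Λ, Ω_m, Ω_γ, Ω_ex > 0 and p > 4, and define F : (0,∞) → ℝ by F(a) = Ω_Λ + Ω_m/a³ + Ω_γ/a⁴ - Ω_ex/a^p. Then there exists a₀ > 0 such that F(a₀) = 0 and F(a) < 0 for all a ∈ (0, a₀). (Hence in the exotic-fluid model with H² = H₀²F(a) there is an earliest scale factor a₀ at which ȧ = aH = 0.) -/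
/-- In the exotic-fluid model with `H² = H₀²F(a)`, `F(a) = Ω_Λ + Ω_m/a³ + Ω_γ/a⁴ - Ω_ex/a^p`,
`p > 4`, there is an earliest scale factor `a₀ > 0` at which `F` vanishes, with `F < 0` on
`(0, a₀)`. -/
theorem earliest_scale_factor (ΩΛ Ωm Ωγ Ωex p : ℝ)
    (hΩΛ : 0 < ΩΛ) (hΩm : 0 < Ωm) (hΩγ : 0 < Ωγ) (hΩex : 0 < Ωex) (hp : 4 < p) :
    ∃ a₀ : ℝ, 0 < a₀ ∧
      ΩΛ + Ωm / a₀ ^ 3 + Ωγ / a₀ ^ 4 - Ωex / a₀ ^ p = 0 ∧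
      ∀ a ∈ Set.Ioo (0 : ℝ) a₀, ΩΛ + Ωm / a ^ 3 + Ωγ / a ^ 4 - Ωex / a ^ p < 0 := by
  have hp0 : (0:ℝ) < p := by linarith
  set G : ℝ → ℝ := fun a => ΩΛ * a ^ p + Ωm * a ^ (p - 3) + Ωγ * a ^ (p - 4) - Ωex with hG
  -- continuity
  have hcont : Continuous G := by
    have c : ∀ q : ℝ, 0 ≤ q → Continuous fun a : ℝ => a ^ q := fun q hq =>
      continuous_iff_continuousAt.2 fun x => Real.continuousAt_rpow_const x q (Or.inr hq)
    exact (((continuous_const.mul (c p (by linarith))).add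
      (continuous_const.mul (c (p-3) (by linarith)))).add
      (continuous_const.mul (c (p-4) (by linarith)))).sub continuous_const
  -- strict monotonicity on [0,∞)
  have hmono : StrictMonoOn G (Set.Ici (0:ℝ)) := by
    intro x hx y _ hxy
    simp only [hG]
    have h1 := Real.rpow_lt_rpow hx hxy hp0
    have h2 := Real.rpow_lt_rpow hx hxy (show (0:ℝ) < p - 3 by linarith)
    have h3 := Real.rpow_lt_rpow hx hxy (show (0:ℝ) < p - 4 by linarith)
    have := mul_lt_mul_of_pos_left h1 hΩΛ
    have := mul_lt_mul_of_pos_left h2 hΩm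
    have := mul_lt_mul_of_pos_left h3 hΩγ
    linarith
  have hG0 : G 0 = -Ωex := by
    simp [hG, Real.zero_rpow hp0.ne', Real.zero_rpow (show p - 3 ≠ 0 by intro h; linarith),
      Real.zero_rpow (show p - 4 ≠ 0 by intro h; linarith)]
  -- a point where G is positive
  set B : ℝ := max 1 (Ωex / ΩΛ + 1) with hB
  have hB1 : (1:ℝ) ≤ B := le_max_left _ _
  have hB0 : (0:ℝ) ≤ B := by linarith
  have hGB : 0 < G B := by
    have h1 : B ≤ B ^ p := by
      have := Real.rpow_le_rpow_of_exponent_le hB1 (show (1:ℝ) ≤ p by linarith)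
      rwa [Real.rpow_one] at this
    have h2 : Ωex / ΩΛ + 1 ≤ B := le_max_right _ _
    have hΩ : Ωex < ΩΛ * B := by
      rw [show ΩΛ * B = ΩΛ * B by ring]
      have : ΩΛ * (Ωex / ΩΛ + 1) ≤ ΩΛ * B := by nlinarith
      have hdiv : ΩΛ * (Ωex / ΩΛ + 1) = Ωex + ΩΛ := by field_simp
      linarith
    have t1 : ΩΛ * B ≤ ΩΛ * B ^ p := by nlinarith
    have t2 : 0 ≤ Ωm * B ^ (p - 3) := by positivity
    have t3 : 0 ≤ Ωγ * B ^ (p - 4) := by positivity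
    simp only [hG]; linarith
  -- IVT
  have h0mem : (0:ℝ) ∈ Set.Icc (G 0) (G B) := by
    constructor <;> [rw [hG0]; skip] <;> linarith
  obtain ⟨a₀, ha₀mem, ha₀⟩ := intermediate_value_Icc hB0 hcont.continuousOn h0mem
  have ha₀pos : 0 < a₀ := by
    rcases lt_or_eq_of_le ha₀mem.1 with h | h
    · exact h
    · exfalso; rw [← h] at ha₀; rw [hG0] at ha₀; linarith
  -- key identity
  have key : ∀ a : ℝ, 0 < a → ΩΛ + Ωm / a ^ 3 + Ωγ / a ^ 4 - Ωex / a ^ p = G a / a ^ p := by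
    intro a ha
    have hap : (0:ℝ) < a ^ p := Real.rpow_pos_of_pos ha p
    have h3 : a ^ (p - 3) = a ^ p / a ^ (3:ℕ) := by
      rw [eq_div_iff (pow_ne_zero _ ha.ne'), ← Real.rpow_natCast a 3, ← Real.rpow_add ha]
      norm_num
    have h4 : a ^ (p - 4) = a ^ p / a ^ (4:ℕ) := by
      rw [eq_div_iff (pow_ne_zero _ ha.ne'), ← Real.rpow_natCast a 4, ← Real.rpow_add ha]
      norm_num
    simp only [hG, h3, h4]
    have h3' : (a:ℝ) ^ (3:ℕ) ≠ 0 := pow_ne_zero _ ha.ne'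
    have h4' : (a:ℝ) ^ (4:ℕ) ≠ 0 := pow_ne_zero _ ha.ne'
    field_simp
  refine ⟨a₀, ha₀pos, ?_, ?_⟩
  · rw [key a₀ ha₀pos, ha₀, zero_div]
  · intro a ha
    rw [key a ha.1]
    have : G a < G a₀ := hmono (le_of_lt ha.1) (le_of_lt ha₀pos) ha.2
    rw [ha₀] at this
    exact div_neg_of_neg_of_pos this (Real.rpow_pos_of_pos ha.1 p)
end

section
/- The function s ↦ s·∫_{1/10}^1 (10x)^{-s} / (x√(1-x)) dx is bounded above on (0, ∞); that is, there exists C > 0 such that s·∫_{1/10}^1 (10x)^{-s} dx/(x√(1-x)) ≤ C for all s > 0. (The paper numerically approximates the supremum as ≈ 0.571; this boundedness yields the estimate Δd_causal/d_CMB ≲ 0.571·a₂/√a_eq < 0.01, showing that the horizon problem cannot be resolved by the exotic fluid without strongly modifying standard cosmology.) -/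
open MeasureTheory

private lemma aux_int1 (s : ℝ) :
    IntegrableOn (fun x : ℝ => Real.sqrt 2 * ((10:ℝ) ^ (-s) * x ^ (-s - 1)))
      (Set.Ioo (1/10 : ℝ) 1) := by
  have hC : ContinuousOn (fun x : ℝ => Real.sqrt 2 * ((10:ℝ) ^ (-s) * x ^ (-s - 1)))
      (Set.Icc (1/10 : ℝ) 1) := by
    apply ContinuousOn.mul continuousOn_const
    apply ContinuousOn.mul continuousOn_const
    apply ContinuousOn.rpow_const continuousOn_id
    intro x hx
    left
    have : (1/10 : ℝ) ≤ x := hx.1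
    intro h; rw [id] at h; linarith
  exact (hC.integrableOn_Icc).mono_set Set.Ioo_subset_Icc_self

private lemma aux_int2' :
    IntegrableOn (fun x : ℝ => ((1:ℝ) - x) ^ (-(1/2) : ℝ)) (Set.Ioo (1/10 : ℝ) 1) := by
  have h1 : IntervalIntegrable (fun u : ℝ => u ^ (-(1/2) : ℝ)) volume 0 (9/10) :=
    intervalIntegral.intervalIntegrable_rpow' (by norm_num)
  have h2 := (h1.comp_sub_left 1).symm
  norm_num at h2
  have h3 : IntegrableOn (fun x : ℝ => ((1:ℝ) - x) ^ (-(1/2) : ℝ))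
      (Set.Ioc (1/10 : ℝ) 1) := by
    rwa [intervalIntegrable_iff_integrableOn_Ioc_of_le (by norm_num)] at h2
  exact h3.mono_set Set.Ioo_subset_Ioc_self

private lemma aux_int2 (s : ℝ) :
    IntegrableOn (fun x : ℝ => 2 * (5:ℝ) ^ (-s) * ((1:ℝ) - x) ^ (-(1/2) : ℝ))
      (Set.Ioo (1/10 : ℝ) 1) :=
  aux_int2'.const_mul _

private lemma s_mul_rpow_le (s : ℝ) (hs : 0 < s) : s * (5:ℝ) ^ (-s) ≤ 1 := by
  have hlog : (1:ℝ) ≤ Real.log 5 := by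
    rw [← Real.log_exp 1]
    exact Real.log_le_log (Real.exp_pos 1)
      (le_trans (le_of_lt Real.exp_one_lt_d9) (by norm_num))
  have hexp : s ≤ Real.exp (s * Real.log 5) := by
    have := Real.add_one_le_exp (s * Real.log 5)
    nlinarith [Real.exp_pos (s * Real.log 5)]
  have h5 : (5:ℝ) ^ (-s) = Real.exp (-(s * Real.log 5)) := by
    rw [Real.rpow_def_of_pos (by norm_num : (0:ℝ) < 5)]
    ring_nf
  rw [h5, Real.exp_neg, mul_inv_le_iff₀ (Real.exp_pos _), one_mul]
  exact hexp

private lemma I1_le (s : ℝ) (hs : 0 < s) :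
    (10:ℝ) ^ (-s) * ∫ x in Set.Ioo (1/10 : ℝ) 1, x ^ (-s - 1) ≤ 1 / s := by
  have hval : ∫ x in Set.Ioo (1/10 : ℝ) 1, x ^ (-s - 1)
      = ((1:ℝ) ^ (-s) - (1/10 : ℝ) ^ (-s)) / (-s) := by
    rw [← integral_Ioc_eq_integral_Ioo, ← intervalIntegral.integral_of_le (by norm_num)]
    rw [integral_rpow (Or.inr ⟨by intro h; exact hs.ne' (by linarith),
      by rw [Set.mem_uIcc]; push_neg; norm_num⟩)]
    norm_num
  rw [hval]
  have h10 : (0:ℝ) < (10:ℝ) ^ (-s) := Real.rpow_pos_of_pos (by norm_num) _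
  have hinv : ((1:ℝ)/10 : ℝ) ^ (-s) = ((10:ℝ) ^ (-s))⁻¹ := by
    rw [one_div, Real.inv_rpow (by norm_num)]
  rw [Real.one_rpow, hinv]
  set t : ℝ := (10:ℝ) ^ (-s) with ht
  have ht1 : t ≤ 1 := Real.rpow_le_one_of_one_le_of_nonpos (by norm_num) (by linarith)
  have hcalc : t * ((1 - t⁻¹) / (-s)) = (1 - t) / s := by
    field_simp
    ring
  rw [hcalc, div_le_div_iff₀ hs hs]
  nlinarith

private lemma I2_le :
    ∫ x in Set.Ioo (1/10 : ℝ) 1, ((1:ℝ) - x) ^ (-(1/2) : ℝ) ≤ 2 := by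
  have hval : ∫ x in Set.Ioo (1/10 : ℝ) 1, ((1:ℝ) - x) ^ (-(1/2) : ℝ)
      = ∫ u in (0:ℝ)..(9/10 : ℝ), u ^ (-(1/2) : ℝ) := by
    rw [← integral_Ioc_eq_integral_Ioo, ← intervalIntegral.integral_of_le (by norm_num)]
    have := intervalIntegral.integral_comp_sub_left (a := (1/10:ℝ)) (b := 1)
      (fun u : ℝ => u ^ (-(1/2) : ℝ)) 1
    norm_num at this ⊢
    convert this using 2
  rw [hval, integral_rpow (Or.inl (by norm_num))]
  have h0 : (0:ℝ) ^ (-(1/2 : ℝ) + 1) = 0 := by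
    rw [Real.zero_rpow (by norm_num)]
  rw [h0]
  have h1 : ((9:ℝ)/10) ^ (-(1/2 : ℝ) + 1) ≤ 1 :=
    Real.rpow_le_one (by norm_num) (by norm_num) (by norm_num)
  norm_num
  linarith

/-- The function `s ↦ s·∫_{1/10}^1 (10x)^{-s}/(x√(1-x)) dx` is bounded above on `(0,∞)`
(numerically, its supremum is ≈ 0.571).  This yields the estimate
`Δd_causal/d_CMB ≲ 0.571·a₂/√a_eq < 0.01`, showing the horizon problem cannot be resolved by
the exotic fluid without strongly modifying standard cosmology. -/
theorem horizon_integral_bounded :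
    ∃ C : ℝ, 0 < C ∧ ∀ s : ℝ, 0 < s →
      s * ∫ x in Set.Ioo (1 / 10 : ℝ) 1, (10 * x) ^ (-s) / (x * Real.sqrt (1 - x)) ≤ C := by
  refine ⟨6, by norm_num, fun s hs => ?_⟩
  set g : ℝ → ℝ := fun x =>
    Real.sqrt 2 * ((10:ℝ) ^ (-s) * x ^ (-s - 1)) + 2 * (5:ℝ) ^ (-s) * ((1:ℝ) - x) ^ (-(1/2) : ℝ)
    with hg
  have hg1 := aux_int1 s
  have hg2 := aux_int2 s
  have hgint : IntegrableOn g (Set.Ioo (1/10 : ℝ) 1) := hg1.add hg2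
  -- pointwise bound f ≤ g on Ioo
  have hfg : ∀ x ∈ Set.Ioo (1/10 : ℝ) 1,
      (10 * x) ^ (-s) / (x * Real.sqrt (1 - x)) ≤ g x := by
    intro x hx
    obtain ⟨hx1, hx2⟩ := hx
    have hx0 : (0:ℝ) < x := by linarith
    have h1x : (0:ℝ) < 1 - x := by linarith
    have hsq : (0:ℝ) < Real.sqrt (1 - x) := Real.sqrt_pos.mpr h1x
    have hmul : ((10:ℝ) * x) ^ (-s) = (10:ℝ) ^ (-s) * x ^ (-s) :=
      Real.mul_rpow (by norm_num) hx0.le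
    have h10 : (0:ℝ) < (10:ℝ) ^ (-s) := Real.rpow_pos_of_pos (by norm_num) _
    have hxs : (0:ℝ) < x ^ (-s) := Real.rpow_pos_of_pos hx0 _
    have hxs1 : x ^ (-s - 1) = x ^ (-s) / x := by
      rw [show (-s - 1 : ℝ) = (-s) - 1 by ring, Real.rpow_sub hx0, Real.rpow_one]
    have hrneg : ((1:ℝ) - x) ^ (-(1/2) : ℝ) = (Real.sqrt (1 - x))⁻¹ := by
      rw [Real.sqrt_eq_rpow, ← Real.rpow_neg h1x.le]
    rcases le_or_gt x (1/2) with hhalf | hhalf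
    · have h2nn : 0 ≤ 2 * (5:ℝ) ^ (-s) * ((1:ℝ) - x) ^ (-(1/2) : ℝ) := by positivity
      have key : (10 * x) ^ (-s) / (x * Real.sqrt (1 - x))
          ≤ Real.sqrt 2 * ((10:ℝ) ^ (-s) * x ^ (-s - 1)) := by
        have hsqrt : Real.sqrt (1/2) ≤ Real.sqrt (1 - x) := Real.sqrt_le_sqrt (by linarith)
        have hsp : (0:ℝ) < Real.sqrt (1/2) := Real.sqrt_pos.mpr (by norm_num)
        have hA : (10 * x) ^ (-s) / (x * Real.sqrt (1 - x))
            = ((10:ℝ) ^ (-s) * x ^ (-s - 1)) / Real.sqrt (1 - x) := by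
          rw [hmul, hxs1]
          field_simp
        rw [hA]
        calc ((10:ℝ) ^ (-s) * x ^ (-s - 1)) / Real.sqrt (1 - x)
            ≤ ((10:ℝ) ^ (-s) * x ^ (-s - 1)) / Real.sqrt (1/2) := by
              apply div_le_div_of_nonneg_left (by positivity) hsp hsqrt
          _ = Real.sqrt 2 * ((10:ℝ) ^ (-s) * x ^ (-s - 1)) := by
              rw [show (1/2 : ℝ) = 2⁻¹ by norm_num, Real.sqrt_inv, div_eq_mul_inv, inv_inv,
                mul_comm]
      simp only [hg]
      linarith
    · have h1nn : 0 ≤ Real.sqrt 2 * ((10:ℝ) ^ (-s) * x ^ (-s - 1)) := by positivity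
      have key : (10 * x) ^ (-s) / (x * Real.sqrt (1 - x))
          ≤ 2 * (5:ℝ) ^ (-s) * ((1:ℝ) - x) ^ (-(1/2) : ℝ) := by
        have hnum : ((10:ℝ) * x) ^ (-s) ≤ (5:ℝ) ^ (-s) := by
          rw [Real.rpow_neg (by norm_num : (0:ℝ) ≤ 5),
            Real.rpow_neg (by positivity : (0:ℝ) ≤ 10 * x)]
          apply inv_anti₀ (Real.rpow_pos_of_pos (by norm_num) _)
          exact Real.rpow_le_rpow (by norm_num) (by linarith) hs.le
        have hden : (1/2 : ℝ) * Real.sqrt (1 - x) ≤ x * Real.sqrt (1 - x) := by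
          apply mul_le_mul_of_nonneg_right (by linarith) hsq.le
        calc (10 * x) ^ (-s) / (x * Real.sqrt (1 - x))
            ≤ (5:ℝ) ^ (-s) / ((1/2 : ℝ) * Real.sqrt (1 - x)) :=
              div_le_div₀ (by positivity) hnum (by positivity) hden
          _ = 2 * (5:ℝ) ^ (-s) * ((1:ℝ) - x) ^ (-(1/2) : ℝ) := by
              rw [hrneg]
              field_simp
      simp only [hg]
      linarith
  have hf0 : ∀ x ∈ Set.Ioo (1/10 : ℝ) 1,
      0 ≤ (10 * x) ^ (-s) / (x * Real.sqrt (1 - x)) := by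
    intro x hx
    have hx0 : (0:ℝ) < x := by linarith [hx.1]
    have h1x : (0:ℝ) < 1 - x := by linarith [hx.2]
    positivity
  have hmono : (∫ x in Set.Ioo (1/10 : ℝ) 1, (10 * x) ^ (-s) / (x * Real.sqrt (1 - x)))
      ≤ ∫ x in Set.Ioo (1/10 : ℝ) 1, g x := by
    apply integral_mono_of_nonneg
    · filter_upwards [ae_restrict_mem measurableSet_Ioo] with x hx using hf0 x hx
    · exact hgint
    · filter_upwards [ae_restrict_mem measurableSet_Ioo] with x hx using hfg x hx
  have hsum : ∫ x in Set.Ioo (1/10 : ℝ) 1, g x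
      = (∫ x in Set.Ioo (1/10 : ℝ) 1, Real.sqrt 2 * ((10:ℝ) ^ (-s) * x ^ (-s - 1)))
        + ∫ x in Set.Ioo (1/10 : ℝ) 1, 2 * (5:ℝ) ^ (-s) * ((1:ℝ) - x) ^ (-(1/2) : ℝ) :=
    integral_add hg1 hg2
  have hI1 : ∫ x in Set.Ioo (1/10 : ℝ) 1, Real.sqrt 2 * ((10:ℝ) ^ (-s) * x ^ (-s - 1))
      = Real.sqrt 2 * ((10:ℝ) ^ (-s) * ∫ x in Set.Ioo (1/10 : ℝ) 1, x ^ (-s - 1)) := by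
    rw [integral_const_mul, integral_const_mul]
  have hI2 : ∫ x in Set.Ioo (1/10 : ℝ) 1, 2 * (5:ℝ) ^ (-s) * ((1:ℝ) - x) ^ (-(1/2) : ℝ)
      = 2 * (5:ℝ) ^ (-s) * ∫ x in Set.Ioo (1/10 : ℝ) 1, ((1:ℝ) - x) ^ (-(1/2) : ℝ) := by
    rw [integral_const_mul]
  have h1 := I1_le s hs
  have h2 := I2_le
  have h5 : (0:ℝ) < (5:ℝ) ^ (-s) := Real.rpow_pos_of_pos (by norm_num) _
  have hsqrt2 : Real.sqrt 2 ≤ 2 := by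
    have h := Real.sqrt_le_sqrt (by norm_num : (2:ℝ) ≤ 4)
    rwa [show (4:ℝ) = 2 ^ 2 by norm_num, Real.sqrt_sq (by norm_num : (0:ℝ) ≤ 2)] at h
  have hs5 := s_mul_rpow_le s hs
  calc s * ∫ x in Set.Ioo (1/10 : ℝ) 1, (10 * x) ^ (-s) / (x * Real.sqrt (1 - x))
      ≤ s * ∫ x in Set.Ioo (1/10 : ℝ) 1, g x := by
        exact mul_le_mul_of_nonneg_left hmono hs.le
    _ = s * (Real.sqrt 2 * ((10:ℝ) ^ (-s) * ∫ x in Set.Ioo (1/10 : ℝ) 1, x ^ (-s - 1)))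
        + (s * (5:ℝ) ^ (-s)) * (2 * ∫ x in Set.Ioo (1/10 : ℝ) 1, ((1:ℝ) - x) ^ (-(1/2) : ℝ)) := by
        rw [hsum, hI1, hI2]; ring
    _ ≤ s * (Real.sqrt 2 * (1/s)) + 1 * (2 * 2) := by
        apply add_le_add
        · apply mul_le_mul_of_nonneg_left _ hs.le
          apply mul_le_mul_of_nonneg_left h1 (Real.sqrt_nonneg 2)
        · have hnn : 0 ≤ ∫ x in Set.Ioo (1/10 : ℝ) 1, ((1:ℝ) - x) ^ (-(1/2) : ℝ) := by
            apply setIntegral_nonneg measurableSet_Ioo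
            intro x hx
            have : (0:ℝ) < 1 - x := by linarith [hx.2]
            positivity
          exact mul_le_mul hs5 (by linarith) (by linarith) (by norm_num)
    _ ≤ 6 := by
        rw [mul_comm s, mul_assoc]
        have hss : (1/s) * s = 1 := by field_simp
        rw [hss, mul_one]
        linarith
end

section
/- Let Σ be a connected topological space, σ : Σ → Σ a continuous free involution, and ε > 0. Consider the ℤ₂-action on (-ε, ε) × Σ given by (t,p) ↦ (-t, σ(p)), with quotient map q. Then the complement of the image of {0} × Σ in the quotient space ((-ε,ε) × Σ)/ℤ₂ is connected; indeed it equals q((0,ε) × Σ), which is a continuous image of the connected set (0,ε) × Σ. (This is the key step showing the reflection surface M₀ of a reflective topological big bang is one-sided: removing M₀ from a tubular neighborhood leaves it connected, which is impossible if the normal bundle of M₀ is trivial.) -/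
lemma eqvgen_cases' {X : Type*} {r : X → X → Prop}
    (hsymm : ∀ a b, r a b → r b a)
    (hcancel : ∀ a b c, r a b → r b c → a = c)
    {a b : X} (h : Relation.EqvGen r a b) : a = b ∨ r a b := by
  induction h with
  | rel x y hxy => exact Or.inr hxy
  | refl x => exact Or.inl rfl
  | symm x y hxy ih =>
    rcases ih with h | h
    · exact Or.inl h.symm
    · exact Or.inr (hsymm _ _ h)
  | trans x y z _ _ ih1 ih2 =>
    rcases ih1 with h1 | h1 <;> rcases ih2 with h2 | h2
    · exact Or.inl (h1.trans h2)
    · exact Or.inr (h1 ▸ h2)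
    · exact Or.inr (h2 ▸ h1)
    · exact Or.inl (hcancel x y z h1 h2)

/-- Let `Σ` be a connected space, `σ : Σ → Σ` a continuous free involution, and `ε > 0`.
Consider the quotient of `(-ε,ε) × Σ` by the `ℤ₂`-action `(t,p) ↦ (-t, σ p)`, with quotient map
`q`.  Then the complement of the image of `{0} × Σ` in the quotient is connected: indeed it
equals `q((0,ε) × Σ)`, a continuous image of the connected set `(0,ε) × Σ`.  This is the key
step showing the reflection surface of a reflective topological big bang is one-sided. -/
theorem reflection_surface_complement_connected
    {S : Type*} [TopologicalSpace S] [ConnectedSpace S]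
    (σ : S → S) (hcont : Continuous σ)
    (hinv : ∀ p, σ (σ p) = p) (hfree : ∀ p, σ p ≠ p)
    (ε : ℝ) (hε : 0 < ε) :
    let X := Set.Ioo (-ε) ε × S
    let r : X → X → Prop := fun a b => (b.1 : ℝ) = -(a.1 : ℝ) ∧ b.2 = σ a.2
    let q : X → Quot r := Quot.mk r
    IsConnected (q '' {x : X | (x.1 : ℝ) = 0})ᶜ ∧
    (q '' {x : X | (x.1 : ℝ) = 0})ᶜ = q '' {x : X | 0 < (x.1 : ℝ)} := by
  intro X r q
  have hsymm : ∀ a b : X, r a b → r b a := by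
    rintro a b ⟨h1, h2⟩
    exact ⟨by rw [h1]; ring, by rw [h2, hinv]⟩
  have hcancel : ∀ a b c : X, r a b → r b c → a = c := by
    rintro a b c ⟨h1, h2⟩ ⟨h3, h4⟩
    refine Prod.ext (Subtype.ext ?_) ?_
    · rw [h3, h1]; ring
    · rw [h4, h2, hinv]
  have key : ∀ a b : X, q a = q b → a = b ∨ r a b := fun a b h =>
    eqvgen_cases' hsymm hcancel (Quot.eqvGen_exact h)
  have heq : (q '' {x : X | (x.1 : ℝ) = 0})ᶜ = q '' {x : X | 0 < (x.1 : ℝ)} := by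
    ext z
    simp only [Set.mem_compl_iff, Set.mem_image, Set.mem_setOf_eq, not_exists]
    constructor
    · intro hz
      obtain ⟨x, hx⟩ := Quot.exists_rep z
      have hx0 : (x.1 : ℝ) ≠ 0 := by
        intro h0
        exact hz x ⟨h0, hx⟩
      rcases lt_or_gt_of_ne hx0 with hneg | hpos
      · have hmem : -(x.1 : ℝ) ∈ Set.Ioo (-ε) ε := by
          have := x.1.2
          constructor <;> [linarith [this.2]; linarith [this.1]]
        refine ⟨(⟨-(x.1 : ℝ), hmem⟩, σ x.2), by simpa using hneg, ?_⟩
        rw [← hx]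
        exact (Quot.sound ⟨rfl, rfl⟩).symm
      · exact ⟨x, hpos, hx⟩
    · rintro ⟨x, hxpos, rfl⟩ y ⟨hy0, hqy⟩
      rcases key y x hqy with h | h
      · rw [h] at hy0; exact absurd hy0 (ne_of_gt hxpos)
      · have : (x.1 : ℝ) = 0 := by rw [h.1, hy0]; ring
        exact absurd this (ne_of_gt hxpos)
  refine ⟨?_, heq⟩
  rw [heq]
  have hA : IsConnected {x : X | 0 < (x.1 : ℝ)} := by
    have h1 : IsConnected {t : Set.Ioo (-ε) ε | 0 < (t : ℝ)} := by
      constructor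
      · exact ⟨⟨ε / 2, by constructor <;> linarith⟩, by simpa using hε⟩
      · rw [← (Topology.IsInducing.subtypeVal (t := Set.Ioo (-ε) ε)).isPreconnected_image]
        have : Subtype.val '' {t : Set.Ioo (-ε) ε | 0 < (t : ℝ)} = Set.Ioo 0 ε := by
          ext t
          simp only [Set.mem_image, Set.mem_setOf_eq, Set.mem_Ioo]
          constructor
          · rintro ⟨⟨u, hu⟩, hu0, rfl⟩
            exact ⟨hu0, hu.2⟩
          · rintro ⟨h1, h2⟩
            exact ⟨⟨t, by constructor <;> linarith⟩, h1, rfl⟩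
        rw [this]
        exact isPreconnected_Ioo
    have hprod : {x : X | 0 < (x.1 : ℝ)} =
        {t : Set.Ioo (-ε) ε | 0 < (t : ℝ)} ×ˢ (Set.univ : Set S) := by
      ext x
      exact ⟨fun h => ⟨h, trivial⟩, fun h => h.1⟩
    rw [hprod]
    exact h1.prod ⟨⟨Classical.arbitrary S, trivial⟩, isPreconnected_univ⟩
  exact hA.image q (continuous_quot_mk.continuousOn)
end
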